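/- arXiv:2004.03026 — 2 statements merged into one kernel-verified Lean document; each statement's English description precedes it below -/
import Mathlib

section
/- Let F be a field of characteristic 3, G = T_{3m} with m = 3k+1, and s ∈ FG the sum of all 3-elements of G including the identity, i.e., s = x̂y^{-1} + 1 + x̂y where x̂ = Σ_{i=0}^{m-1} x^i. Then Ann_{FG}(s) = {a⁻ x̂ y^{-1} + a x̂ + a⁺ x̂ y : a⁻, a, a⁺ ∈ F, a⁻ + a + a⁺ = 0}. -/
/-- Relations of the presentation `T_{3m} = ⟨x, y | x^m = y^3 = 1, y⁻¹xy = x^t⟩`. -/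
def T3mRels (m t : ℕ) : Set (FreeGroup (Fin 2)) :=
  {FreeGroup.of 0 ^ m, FreeGroup.of 1 ^ 3,
   (FreeGroup.of 1)⁻¹ * FreeGroup.of 0 * FreeGroup.of 1 * (FreeGroup.of 0 ^ t)⁻¹}

/-- The group `T_{3m}` given by the presentation `⟨x, y | x^m = y^3 = 1, y⁻¹xy = x^t⟩`. -/
abbrev T3m (m t : ℕ) : Type := PresentedGroup (T3mRels m t)

/-- The generator `x` of `T_{3m}`. -/
def xg (m t : ℕ) : T3m m t := PresentedGroup.of 0

/-- The generator `y` of `T_{3m}`. -/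
def yg (m t : ℕ) : T3m m t := PresentedGroup.of 1

/-!
Put `e = x̂`, `w = y` and `u = 1 + w + w²`. Since `xe = e` and `m ≡ 1 (mod 3)`,
`e² = me = e`; and `w` commutes with `e` because `y⁻¹x̂y` is the geometric sum of `x^t`, which
generates the same cyclic group as `x`. Now `s = eu + (1 - e)`, and for an idempotent `e`
commuting with `u` the Peirce decomposition gives `αs = 0 ↔ αe = α ∧ αu = 0`, and symmetrically
on the left. Every `g x̂` equals `x̂ y^j`, so `αe = α` puts `α` in the span of `e, ew, ew²`, on
which right multiplication by `u` is `α ↦ (sum of the coefficients) • eu`. Finally `eu ≠ 0`: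
under `T_{3m} → C₃`, `x ↦ 1`, it maps to `m(1 + y + y²) = 1 + y + y²`.
-/

open Finset

section GeomSum
variable {R : Type*} [Ring R] {a : R} {m : ℕ}

theorem mul_geom_sum_of_pow_eq_one (h : a ^ m = 1) :
    a * ∑ i ∈ range m, a ^ i = ∑ i ∈ range m, a ^ i := by
  have := mul_geom_sum a m
  rwa [h, sub_self, sub_mul, one_mul, sub_eq_zero] at this

theorem geom_sum_mul_of_pow_eq_one (h : a ^ m = 1) :
    (∑ i ∈ range m, a ^ i) * a = ∑ i ∈ range m, a ^ i := by
  have := geom_sum_mul a m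
  rwa [h, sub_self, mul_sub, mul_one, sub_eq_zero] at this

theorem pow_mul_geom_sum_of_pow_eq_one (h : a ^ m = 1) (n : ℕ) :
    a ^ n * ∑ i ∈ range m, a ^ i = ∑ i ∈ range m, a ^ i := by
  induction n with
  | zero => rw [pow_zero, one_mul]
  | succ n ih => rw [pow_succ, mul_assoc, mul_geom_sum_of_pow_eq_one h, ih]

theorem geom_sum_mul_pow_of_pow_eq_one (h : a ^ m = 1) (n : ℕ) :
    (∑ i ∈ range m, a ^ i) * a ^ n = ∑ i ∈ range m, a ^ i := by
  induction n with
  | zero => rw [pow_zero, mul_one]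
  | succ n ih => rw [pow_succ, ← mul_assoc, ih, geom_sum_mul_of_pow_eq_one h]

theorem isIdempotentElem_geom_sum (h : a ^ m = 1) (hm : (m : R) = 1) :
    IsIdempotentElem (∑ i ∈ range m, a ^ i) := by
  rw [IsIdempotentElem, sum_mul]
  simp_rw [pow_mul_geom_sum_of_pow_eq_one h, sum_const, card_range, nsmul_eq_mul, hm, one_mul]

/-- Both sums equal their product, each factor absorbing the powers of the other element. -/
theorem geom_sum_eq_of_pow_eq {b : R} (ha : a ^ m = 1) (hb : b ^ m = 1) (hm : (m : R) = 1)
    {k l : ℕ} (hab : a = b ^ k) (hba : b = a ^ l) :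
    ∑ i ∈ range m, a ^ i = ∑ i ∈ range m, b ^ i := by
  calc ∑ i ∈ range m, a ^ i = (∑ i ∈ range m, a ^ i) * ∑ i ∈ range m, b ^ i := by
        simp_rw [mul_sum, hba, ← pow_mul, geom_sum_mul_pow_of_pow_eq_one ha, sum_const,
          card_range, nsmul_eq_mul, hm, one_mul]
    _ = ∑ i ∈ range m, b ^ i := by
        simp_rw [sum_mul, hab, ← pow_mul, pow_mul_geom_sum_of_pow_eq_one hb, sum_const,
          card_range, nsmul_eq_mul, hm, one_mul]

end GeomSum

section Peirce
variable {R : Type*} [Ring R] {e u : R}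

theorem IsIdempotentElem.mul_eq_zero_iff_of_commute (he : IsIdempotentElem e)
    (hue : Commute u e) (α : R) :
    α * (e * u + (1 - e)) = 0 ↔ α * e = α ∧ α * u = 0 := by
  have hcut : (e * u + (1 - e)) * e = e * u := by
    rw [add_mul, sub_mul, one_mul, he.eq, sub_self, add_zero, mul_assoc, hue.eq, ← mul_assoc,
      he.eq]
  constructor
  · intro h
    have hαeu : α * e * u = 0 := by rw [mul_assoc, ← hcut, ← mul_assoc, h, zero_mul]
    have hαe : α * e = α := by
      rw [mul_add, ← mul_assoc, hαeu, zero_add, mul_sub, mul_one, sub_eq_zero] at h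
      exact h.symm
    exact ⟨hαe, by rwa [hαe] at hαeu⟩
  · rintro ⟨hαe, hαu⟩
    rw [mul_add, ← mul_assoc, hαe, hαu, mul_sub, mul_one, hαe, sub_self, add_zero]

theorem IsIdempotentElem.eq_zero_iff_of_commute (he : IsIdempotentElem e)
    (hue : Commute u e) (α : R) :
    (e * u + (1 - e)) * α = 0 ↔ e * α = α ∧ u * α = 0 := by
  have hcut : e * (e * u + (1 - e)) = u * e := by
    rw [mul_add, mul_sub, mul_one, he.eq, sub_self, add_zero, ← mul_assoc, he.eq, hue.eq]
  constructor
  · intro h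
    have hueα : u * (e * α) = 0 := by rw [← mul_assoc, ← hcut, mul_assoc, h, mul_zero]
    have heα : e * α = α := by
      rw [add_mul, ← hue.eq, mul_assoc, hueα, zero_add, sub_mul, one_mul, sub_eq_zero] at h
      exact h.symm
    exact ⟨heα, by rwa [heα] at hueα⟩
  · rintro ⟨heα, huα⟩
    rw [add_mul, ← hue.eq, mul_assoc, heα, huα, sub_mul, one_mul, heα, sub_self, add_zero]

end Peirce

section OrderThree
variable {F R : Type*} [Ring R] {e w : R}

theorem mul_one_add_add_sq_of_pow_three (hw : w ^ 3 = 1) :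
    w * (1 + w + w ^ 2) = 1 + w + w ^ 2 := by
  rw [mul_add, mul_add, mul_one, ← pow_two, ← pow_succ', hw]; abel

theorem commute_one_add_add_sq (w : R) : Commute w (1 + w + w ^ 2) :=
  ((Commute.one_right w).add_right (Commute.refl w)).add_right ((Commute.refl w).pow_right 2)

theorem span_range_mul_pow_le_of_pow_three [Semiring F] [Module F R] (hw : w ^ 3 = 1) :
    Submodule.span F (Set.range fun j : ℕ ↦ e * w ^ j) ≤
      Submodule.span F (Set.range fun j : Fin 3 ↦ e * w ^ (j : ℕ)) := by
  refine Submodule.span_le.mpr ?_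
  rintro _ ⟨j, rfl⟩
  exact Submodule.subset_span
    ⟨⟨j % 3, Nat.mod_lt _ (by norm_num)⟩, by simp only [← pow_eq_pow_mod j hw]⟩

theorem smul_add_smul_add_smul_mul_one_add_add_sq [CommSemiring F] [Algebra F R]
    (hw : w ^ 3 = 1) (cm c cp : F) :
    (cm • (e * w ^ 2) + c • e + cp • (e * w)) * (1 + w + w ^ 2)
      = (cm + c + cp) • (e * (1 + w + w ^ 2)) := by
  have hwu := mul_one_add_add_sq_of_pow_three hw
  simp only [add_mul, smul_mul_assoc, mul_assoc, pow_two, add_smul]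
  rw [← pow_two, hwu, hwu]

theorem setOf_mul_eq_zero_and_mul_eq_zero [Field F] [Algebra F R] (he : IsIdempotentElem e)
    (hw : w ^ 3 = 1) (hwe : Commute w e)
    (hspan : ∀ α : R, α * e ∈ Submodule.span F (Set.range fun j : ℕ ↦ e * w ^ j))
    (hne : e * (1 + w + w ^ 2) ≠ 0) :
    {α : R | α * (e * w ^ 2 + 1 + e * w) = 0 ∧ (e * w ^ 2 + 1 + e * w) * α = 0}
      = {α : R | ∃ am a ap : F, am + a + ap = 0 ∧
          α = am • (e * w ^ 2) + a • e + ap • (e * w)} := by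
  set u := 1 + w + w ^ 2 with hu
  have hs : e * w ^ 2 + 1 + e * w = e * u + (1 - e) := by rw [hu]; noncomm_ring
  have hue : Commute u e := ((Commute.one_left e).add_left hwe).add_left (hwe.pow_left 2)
  ext α
  simp only [Set.mem_ofPred_eq, hs, he.mul_eq_zero_iff_of_commute hue,
    he.eq_zero_iff_of_commute hue]
  constructor
  · rintro ⟨⟨hαe, hαu⟩, -⟩
    obtain ⟨c, hc⟩ := Submodule.mem_span_range_iff_exists_fun F |>.mp
      (span_range_mul_pow_le_of_pow_three hw (hαe ▸ hspan α))
    rw [Fin.sum_univ_three] at hc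
    have hα : α = c 2 • (e * w ^ 2) + c 0 • e + c 1 • (e * w) := by
      rw [← hc]
      simp only [Fin.val_zero, Fin.val_one, Fin.val_two, pow_zero, pow_one, mul_one]
      abel
    refine ⟨c 2, c 0, c 1, ?_, hα⟩
    rw [hα, smul_add_smul_add_smul_mul_one_add_add_sq hw, smul_eq_zero] at hαu
    exact hαu.resolve_right hne
  · rintro ⟨am, a, ap, hsum, hα⟩
    have hcomm : ∀ z : R, Commute z e → Commute z w → Commute z α := fun z hze hzw ↦ by
      rw [hα]
      exact (((hze.mul_right (hzw.pow_right 2)).smul_right am).add_right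
        (hze.smul_right a)).add_right ((hze.mul_right hzw).smul_right ap)
    have heα : e * α = α := by
      rw [hα]; simp only [mul_add, mul_smul_comm, ← mul_assoc, he.eq]
    have hαu : α * u = 0 := by
      rw [hα, smul_add_smul_add_smul_mul_one_add_add_sq hw, hsum, zero_smul]
    exact ⟨⟨(hcomm e (.refl e) hwe.symm).eq.symm.trans heα, hαu⟩, heα,
      (hcomm u hue (commute_one_add_add_sq w).symm).eq.trans hαu⟩

end OrderThree

theorem MonoidAlgebra.natCast_eq_one {k M : Type*} [Semiring k] [Monoid M] {n : ℕ}
    (h : (n : k) = 1) : (n : MonoidAlgebra k M) = 1 := by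
  rw [natCast_def, h, ← one_def]

namespace T3m
variable {m t : ℕ}

theorem xg_pow : xg m t ^ m = 1 :=
  PresentedGroup.one_of_mem (x := FreeGroup.of 0 ^ m) (by simp [T3mRels])

theorem yg_pow_three : yg m t ^ 3 = 1 :=
  PresentedGroup.one_of_mem (x := FreeGroup.of 1 ^ 3) (by simp [T3mRels])

theorem yg_inv_mul_xg_mul_yg : (yg m t)⁻¹ * xg m t * yg m t = xg m t ^ t :=
  PresentedGroup.mk_eq_mk_of_mul_inv_mem (by simp [T3mRels])

theorem yg_mul_xg_pow_pow (i : ℕ) : yg m t * (xg m t ^ t) ^ i = xg m t ^ i * yg m t := by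
  have := conj_pow (i := i) (a := (yg m t)⁻¹) (b := xg m t)
  rw [inv_inv, yg_inv_mul_xg_mul_yg] at this
  rw [this]
  group

theorem xg_pow_pow_sq (ht : t ^ 3 % m = 1 % m) : (xg m t ^ t) ^ (t ^ 2) = xg m t := by
  rw [← pow_mul, ← pow_succ', pow_eq_pow_mod _ xg_pow, ht, ← pow_eq_pow_mod _ xg_pow, pow_one]

def toC3 : T3m m t →* Multiplicative (ZMod 3) :=
  PresentedGroup.toGroup (f := ![1, .ofAdd 1]) <| by
    rintro r (rfl | rfl | rfl) <;> simp
    decide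

theorem toC3_xg : toC3 (xg m t) = 1 := PresentedGroup.toGroup.of _

theorem toC3_yg : toC3 (yg m t) = .ofAdd 1 := PresentedGroup.toGroup.of _

section GroupAlgebra
variable (F : Type*) [CommRing F]

noncomputable abbrev xhat (m t : ℕ) : MonoidAlgebra F (T3m m t) :=
  ∑ i ∈ range m, MonoidAlgebra.of F (T3m m t) (xg m t) ^ i

theorem of_xg_pow : MonoidAlgebra.of F (T3m m t) (xg m t) ^ m = 1 := by
  rw [← map_pow, xg_pow, map_one]

theorem of_yg_pow_three : MonoidAlgebra.of F (T3m m t) (yg m t) ^ 3 = 1 := by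
  rw [← map_pow, yg_pow_three, map_one]

variable {F}

theorem isIdempotentElem_xhat (hm : (m : F) = 1) : IsIdempotentElem (xhat F m t) :=
  isIdempotentElem_geom_sum (of_xg_pow F) (MonoidAlgebra.natCast_eq_one hm)

theorem commute_of_yg_xhat (ht : t ^ 3 % m = 1 % m) (hm : (m : F) = 1) :
    Commute (MonoidAlgebra.of F _ (yg m t)) (xhat F m t) := by
  have hxt : MonoidAlgebra.of F (T3m m t) (xg m t ^ t) ^ m = 1 := by
    rw [← map_pow, ← pow_mul, mul_comm, pow_mul, xg_pow, one_pow, map_one]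
  have hconj : xhat F m t = ∑ i ∈ range m, MonoidAlgebra.of F _ (xg m t ^ t) ^ i :=
    geom_sum_eq_of_pow_eq (of_xg_pow F) hxt (MonoidAlgebra.natCast_eq_one hm)
      (by rw [← map_pow, xg_pow_pow_sq ht]) (map_pow _ _ _)
  rw [Commute, SemiconjBy]
  conv_lhs => rw [hconj]
  simp only [mul_sum, sum_mul, ← map_pow, ← map_mul, yg_mul_xg_pow_pow]

theorem exists_of_mul_xhat_eq (ht : t ^ 3 % m = 1 % m) (hm : (m : F) = 1) (g : T3m m t) :
    ∃ j : ℕ, MonoidAlgebra.of F _ g * xhat F m t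
      = xhat F m t * MonoidAlgebra.of F _ (yg m t) ^ j := by
  set w := MonoidAlgebra.of F (T3m m t) (yg m t)
  have hg : g ∈ Subgroup.closure (Set.range PresentedGroup.of) := by
    rw [PresentedGroup.closure_range_of]; exact Subgroup.mem_top g
  induction hg using Subgroup.closure_induction with
  | mem g hg =>
    obtain ⟨i, rfl⟩ := hg
    fin_cases i
    · exact ⟨0, by rw [pow_zero, mul_one]; exact mul_geom_sum_of_pow_eq_one (of_xg_pow F)⟩
    · exact ⟨1, by rw [pow_one]; exact commute_of_yg_xhat ht hm⟩
  | one => exact ⟨0, by rw [map_one, one_mul, pow_zero, mul_one]⟩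
  | mul g h _ _ hg hh =>
    obtain ⟨j, hj⟩ := hg
    obtain ⟨k, hk⟩ := hh
    exact ⟨j + k, by rw [map_mul, mul_assoc, hk, ← mul_assoc, hj, mul_assoc, pow_add]⟩
  | inv g _ hg =>
    obtain ⟨j, hj⟩ := hg
    refine ⟨2 * j, ?_⟩
    calc MonoidAlgebra.of F _ g⁻¹ * xhat F m t
        = MonoidAlgebra.of F _ g⁻¹ * (xhat F m t * w ^ j) * w ^ (2 * j) := by
          rw [mul_assoc, mul_assoc, ← pow_add, show j + 2 * j = 3 * j by ring, pow_mul,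
            of_yg_pow_three, one_pow, mul_one]
      _ = xhat F m t * w ^ (2 * j) := by
          rw [← hj, ← mul_assoc, ← map_mul, inv_mul_cancel, map_one, one_mul]

theorem mul_xhat_mem_span (ht : t ^ 3 % m = 1 % m) (hm : (m : F) = 1)
    (α : MonoidAlgebra F (T3m m t)) :
    α * xhat F m t ∈ Submodule.span F
      (Set.range fun j : ℕ ↦ xhat F m t * MonoidAlgebra.of F _ (yg m t) ^ j) := by
  induction α using MonoidAlgebra.induction_on with
  | of g =>
    obtain ⟨j, hj⟩ := exists_of_mul_xhat_eq ht hm g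
    exact Submodule.subset_span ⟨j, hj.symm⟩
  | add α β hα hβ => rw [add_mul]; exact add_mem hα hβ
  | smul r α hα => rw [smul_mul_assoc]; exact Submodule.smul_mem _ r hα

theorem xhat_mul_ne_zero [Nontrivial F] (hm : (m : F) = 1) :
    xhat F m t * (1 + MonoidAlgebra.of F _ (yg m t) + MonoidAlgebra.of F _ (yg m t) ^ 2) ≠ 0 := by
  set φ := MonoidAlgebra.mapDomainRingHom F (toC3 (m := m) (t := t))
  have hφ : ∀ g, φ (MonoidAlgebra.of F _ g) = MonoidAlgebra.of F _ (toC3 g) := fun g ↦ by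
    simp [φ]
  have hg2 : (Multiplicative.ofAdd (1 : ZMod 3)) ^ 2 ≠ 1 := by decide
  intro h
  have h1 := congrArg (fun z ↦ (φ z).coeff 1) h
  simp only [map_mul, map_sum, map_add, map_one, map_pow, map_zero, hφ, toC3_xg, toC3_yg,
    one_pow, sum_const, card_range, nsmul_eq_mul, mul_one, MonoidAlgebra.natCast_eq_one hm,
    one_mul] at h1
  simp [MonoidAlgebra.coeff_add, hg2] at h1

end GroupAlgebra
end T3m

theorem ann_s_eq_general (F : Type*) [Field F] [CharP F 3] (m t k : ℕ)
    (hm : m = 3 * k + 1) (ht : t ^ 3 % m = 1 % m) :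
    letI G := T3m m t
    letI xhat : MonoidAlgebra F G := ∑ i ∈ Finset.range m, MonoidAlgebra.of F G (xg m t ^ i)
    letI s : MonoidAlgebra F G :=
      xhat * MonoidAlgebra.of F G (yg m t)⁻¹ + 1 + xhat * MonoidAlgebra.of F G (yg m t)
    {α : MonoidAlgebra F G | α * s = 0 ∧ s * α = 0}
      = {α : MonoidAlgebra F G | ∃ am a ap : F, am + a + ap = 0 ∧
          α = am • (xhat * MonoidAlgebra.of F G (yg m t)⁻¹) + a • xhat
              + ap • (xhat * MonoidAlgebra.of F G (yg m t))} := by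
  have hmF : (m : F) = 1 := by
    rw [hm, Nat.cast_add, Nat.cast_mul, CharP.cast_eq_zero F 3, zero_mul, zero_add, Nat.cast_one]
  have hyinv : MonoidAlgebra.of F (T3m m t) (yg m t)⁻¹ = MonoidAlgebra.of F _ (yg m t) ^ 2 := by
    rw [← map_pow, inv_eq_of_mul_eq_one_right (by rw [← pow_succ', T3m.yg_pow_three])]
  simp only [map_pow, hyinv]
  exact setOf_mul_eq_zero_and_mul_eq_zero (T3m.isIdempotentElem_xhat hmF) (T3m.of_yg_pow_three F)
    (T3m.commute_of_yg_xhat ht hmF) (T3m.mul_xhat_mem_span ht hmF) (T3m.xhat_mul_ne_zero hmF)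

/-- For `F` of characteristic 3 and `G = T_{3m}`, with `s = x̂y⁻¹ + 1 + x̂y` the sum of all
3-elements, `Ann_{FG}(s) = {a⁻x̂y⁻¹ + ax̂ + a⁺x̂y : a⁻ + a + a⁺ = 0}`. -/
theorem ann_s_eq (F : Type*) [Field F] [CharP F 3] (m t k : ℕ) (ht1 : 1 ≤ t)
    (hm : m = 3 * k + 1) (ht : t ^ 3 % m = 1 % m) (hgcd : Nat.gcd m (t - 1) = 1) :
    letI G := T3m m t
    letI xhat : MonoidAlgebra F G := ∑ i ∈ Finset.range m, MonoidAlgebra.of F G (xg m t ^ i)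
    letI s : MonoidAlgebra F G :=
      xhat * MonoidAlgebra.of F G (yg m t)⁻¹ + 1 + xhat * MonoidAlgebra.of F G (yg m t)
    {α : MonoidAlgebra F G | α * s = 0 ∧ s * α = 0}
      = {α : MonoidAlgebra F G | ∃ am a ap : F, am + a + ap = 0 ∧
          α = am • (xhat * MonoidAlgebra.of F G (yg m t)⁻¹) + a • xhat
              + ap • (xhat * MonoidAlgebra.of F G (yg m t))} :=
  ann_s_eq_general F m t k hm ht
end

section
/- Let F be a finite field of characteristic 3, G = T_{3m} with m = 3k+1, and H = ⟨x⟩. If α ∈ Δ(G,H) commutes with every element of Δ(G,H), then α commutes with every element of FG; that is, Z(Δ(G,H)) ⊆ Z(FG). -/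
/-! `H = ⟨x⟩` has order dividing `m`, which is prime to 3, so `|H|` is invertible in `F` and
`e = |H|⁻¹ Ĥ`, where `Ĥ = ∑_{h ∈ H} h`, is a central element with `Δ(G,H) e = 0` and
`1 - e ∈ Δ(G,H)`. Writing `γ = γ (1 - e) + γ e`, an element `α` of the centre of `Δ(G,H)` commutes
with the first summand by assumption, while `α γ e = γ e α = 0`. -/

namespace MonoidAlgebra

variable (k : Type*) {G : Type*} [Group G] (H : Subgroup G) [Fintype H]

noncomputable def subgroupSum [Semiring k] : MonoidAlgebra k G := ∑ h : H, single (h : G) 1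

variable {k H}

section Semiring

variable [Semiring k]

theorem single_mul_subgroupSum {h : G} (hh : h ∈ H) :
    single h 1 * subgroupSum k H = subgroupSum k H := by
  simp only [subgroupSum, Finset.mul_sum, single_mul_single, mul_one]
  exact Fintype.sum_equiv (Equiv.mulLeft ⟨h, hh⟩) _ _ fun _ => rfl

theorem commute_subgroupSum [H.Normal] (a : MonoidAlgebra k G) : Commute (subgroupSum k H) a := by
  induction a using MonoidAlgebra.induction_linear with
  | zero => exact Commute.zero_right _
  | add a b ha hb => exact ha.add_right hb
  | single g r =>
    simp only [Commute, SemiconjBy, subgroupSum, Finset.mul_sum, Finset.sum_mul, single_mul_single,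
      one_mul, mul_one]
    exact (Fintype.sum_equiv (MulAut.conjNormal g).toEquiv _ _ fun h => by simp).symm

theorem mapDomain_mk_subgroupSum [H.Normal] :
    mapDomainRingHom k (QuotientGroup.mk' H) (subgroupSum k H) =
      (Fintype.card H : MonoidAlgebra k (G ⧸ H)) := by
  have h1 (h : H) : mapDomainRingHom k (QuotientGroup.mk' H) (single (h : G) 1) = 1 := by
    simp [mapDomain_single, (QuotientGroup.eq_one_iff (h : G)).mpr h.2, one_def]
  simp [subgroupSum, h1]

theorem mul_subgroupSum_eq_zero_of_mem_ker [H.Normal] {α : MonoidAlgebra k G}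
    (hα : α ∈ RingHom.ker (mapDomainRingHom k (QuotientGroup.mk' H))) :
    α * subgroupSum k H = 0 := by
  -- `β Ĥ` only depends on the image of `β` in `k[G ⧸ H]`, because `h Ĥ = Ĥ` for `h ∈ H`.
  let ψ : MonoidAlgebra k (G ⧸ H) →+ MonoidAlgebra k G :=
    liftNC (singleAddHom 1) fun q => Quotient.liftOn' q (fun g => single g 1 * subgroupSum k H)
      fun a b hab => by
        rw [← mul_inv_cancel_left a b, ← one_mul (1 : k), ← single_mul_single, mul_assoc,
          single_mul_subgroupSum (QuotientGroup.leftRel_apply.mp hab), mul_one]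
  have hψ : ∀ β, β * subgroupSum k H = ψ (mapDomainRingHom k (QuotientGroup.mk' H) β) := by
    intro β
    induction β using MonoidAlgebra.induction_linear with
    | zero => simp
    | add a b ha hb => rw [add_mul, ha, hb, map_add, map_add]
    | single g r =>
      simp [ψ, mapDomain_single, ← mul_assoc, single_mul_single]
  rw [hψ, RingHom.mem_ker.mp hα, map_zero]

end Semiring

section CommRing

variable [CommRing k] [H.Normal]

theorem one_sub_smul_subgroupSum_mem_ker {u : k} (hu : u * Fintype.card H = 1) :
    1 - u • subgroupSum k H ∈ RingHom.ker (mapDomainRingHom k (QuotientGroup.mk' H)) := by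
  rw [RingHom.mem_ker, map_sub, map_one, mapDomainRingHom_apply, mapDomain_smul,
    ← mapDomainRingHom_apply, mapDomain_mk_subgroupSum, Algebra.smul_def,
    ← map_natCast (algebraMap k _), ← map_mul, hu, map_one, sub_self]

theorem commute_of_forall_mem_ker_commute (hH : IsUnit (Fintype.card H : k))
    {α : MonoidAlgebra k G} (hα : α ∈ RingHom.ker (mapDomainRingHom k (QuotientGroup.mk' H)))
    (hcomm : ∀ β ∈ RingHom.ker (mapDomainRingHom k (QuotientGroup.mk' H)), Commute α β)
    (γ : MonoidAlgebra k G) : Commute α γ := by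
  obtain ⟨u, hu⟩ := hH.exists_left_inv
  set e := u • subgroupSum k H
  have hαe : α * e = 0 := by
    rw [mul_smul_comm, mul_subgroupSum_eq_zero_of_mem_ker hα, smul_zero]
  have hγe : Commute α (γ * e) := by
    have he (a : MonoidAlgebra k G) : Commute e a := (commute_subgroupSum a).smul_left u
    calc α * (γ * e) = α * e * γ := by rw [← (he γ).eq, mul_assoc]
      _ = γ * (α * e) := by rw [hαe, zero_mul, mul_zero]
      _ = γ * e * α := by rw [← (he α).eq, mul_assoc]
  have hdecomp : γ = γ * (1 - e) + γ * e := by rw [mul_sub, mul_one, sub_add_cancel]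
  rw [hdecomp]
  exact (hcomm _ (Ideal.mul_mem_left _ γ (one_sub_smul_subgroupSum_mem_ker hu))).add_right hγe

end CommRing

end MonoidAlgebra

theorem xg_pow_eq_one (m t : ℕ) : xg m t ^ m = 1 := by
  rw [xg, PresentedGroup.of, ← map_pow]
  exact PresentedGroup.one_of_mem (by simp [T3mRels])

theorem center_aug_subset_center_general (F : Type*) [Field F] [CharP F 3] (m t k : ℕ)
    (hm : m = 3 * k + 1) [hN : (Subgroup.zpowers (xg m t)).Normal] :
    ∀ α ∈ RingHom.ker (MonoidAlgebra.mapDomainRingHom F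
        (QuotientGroup.mk' (Subgroup.zpowers (xg m t)))),
      (∀ β ∈ RingHom.ker (MonoidAlgebra.mapDomainRingHom F
          (QuotientGroup.mk' (Subgroup.zpowers (xg m t)))), α * β = β * α) →
      ∀ γ : MonoidAlgebra F (T3m m t), α * γ = γ * α := by
  intro α hα hcomm γ
  have hx : IsOfFinOrder (xg m t) :=
    isOfFinOrder_iff_pow_eq_one.mpr ⟨m, by omega, xg_pow_eq_one m t⟩
  have : Finite (Subgroup.zpowers (xg m t)) := hx.finite_zpowers
  let := Fintype.ofFinite (Subgroup.zpowers (xg m t))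
  have hcard : ¬ 3 ∣ Fintype.card (Subgroup.zpowers (xg m t)) := by
    rw [Fintype.card_eq_nat_card, Nat.card_zpowers]
    intro h3
    have := h3.trans (orderOf_dvd_of_pow_eq_one (xg_pow_eq_one m t))
    omega
  refine MonoidAlgebra.commute_of_forall_mem_ker_commute (Ne.isUnit ?_) hα hcomm γ
  rwa [Ne, CharP.cast_eq_zero_iff F 3]

/-- For a finite field `F` of characteristic 3, `G = T_{3m}` and `H = ⟨x⟩`: any element of
`Δ(G,H)` commuting with all of `Δ(G,H)` commutes with all of `FG`, i.e.
`Z(Δ(G,H)) ⊆ Z(FG)`. -/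
theorem center_aug_subset_center (F : Type*) [Field F] [Fintype F] [CharP F 3] (m t k : ℕ)
    (ht1 : 1 ≤ t) (hm : m = 3 * k + 1) (ht : t ^ 3 % m = 1 % m)
    (hgcd : Nat.gcd m (t - 1) = 1) [hN : (Subgroup.zpowers (xg m t)).Normal] :
    ∀ α ∈ RingHom.ker (MonoidAlgebra.mapDomainRingHom F
        (QuotientGroup.mk' (Subgroup.zpowers (xg m t)))),
      (∀ β ∈ RingHom.ker (MonoidAlgebra.mapDomainRingHom F
          (QuotientGroup.mk' (Subgroup.zpowers (xg m t)))), α * β = β * α) →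
      ∀ γ : MonoidAlgebra F (T3m m t), α * γ = γ * α :=
  center_aug_subset_center_general F m t k hm (hN := hN)
end
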